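/- (Out-version threshold criterion, Lemma 8 of the paper, due to Crauser et al.) Define threshold := ⨅ {D u + w u v : E u v ∧ u ∉ F}, the infimum over all edges whose tail is unfixed. Let x ∉ F be a vertex with D x ≤ threshold. Then D x = cost x. -/

import Mathlib

open scoped ENNReal

variable {V : Type*}

/-- `IsPath E v0 x p` means `p` is a finite sequence of vertices starting at `v0`,
ending at `x`, with consecutive vertices joined by edges of `E`. -/
def IsPath (E : V → V → Prop) (v0 x : V) (p : List V) : Prop :=
  p.Chain' E ∧ p.head? = some v0 ∧ p.getLast? = some x

/-- The cost of a path: the sum of the weights of its consecutive edges. -/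
noncomputable def pathCost (w : V → V → ℝ≥0∞) (p : List V) : ℝ≥0∞ :=
  ((p.zip p.tail).map fun q => w q.1 q.2).sum

/-- `cost E w v0 x` : the infimum of the costs of all paths from `v0` to `x`
(`∞` if `x` is unreachable from `v0`). -/
noncomputable def cost (E : V → V → Prop) (w : V → V → ℝ≥0∞) (v0 x : V) : ℝ≥0∞ :=
  ⨅ p : {p : List V // IsPath E v0 x p}, pathCost w p.1

/-- An `F`-path from `v0` to `x` : a path all of whose vertices other than the
final vertex `x` lie in `F`. `Dfun E w v0 F x` is the infimum of the costs of
`F`-paths from `v0` to `x` (`∞` if no `F`-path to `x` exists). -/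
noncomputable def Dfun (E : V → V → Prop) (w : V → V → ℝ≥0∞) (v0 : V) (F : Set V)
    (x : V) : ℝ≥0∞ :=
  ⨅ p : {p : List V // IsPath E v0 x p ∧ ∀ v ∈ p.dropLast, v ∈ F}, pathCost w p.1

/-! Every path from `v0` that is not an `F`-path leaves `F` for the first time along an
edge `u → v` with `u ∉ F`; the part of the path up to `u` is an `F`-path, so the path
costs at least `D u + w u v`, which is at least the threshold and hence at least `D x`. -/

section Paths

variable {E : V → V → Prop} {w : V → V → ℝ≥0∞} {v0 x : V} {F : Set V}

theorem pathCost_cons_cons (a b : V) (l : List V) :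
    pathCost w (a :: b :: l) = w a b + pathCost w (b :: l) := by
  simp [pathCost]

theorem pathCost_append_pair (l : List V) (y x : V) :
    pathCost w (l ++ [y, x]) = pathCost w (l ++ [y]) + w y x := by
  induction l with
  | nil => simp [pathCost]
  | cons a l ih =>
    cases l with
    | nil => simp [pathCost]
    | cons b l =>
      simp only [List.cons_append, pathCost_cons_cons] at ih ⊢
      rw [ih, add_assoc]

theorem IsPath.of_append_pair {y : V} {l : List V} (hp : IsPath E v0 x (l ++ [y, x])) :
    IsPath E v0 y (l ++ [y]) ∧ E y x := by
  obtain ⟨hchain, hhead, -⟩ := hp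
  have hchain : (l ++ [y, x]).IsChain E := hchain
  rw [List.isChain_append_cons_cons] at hchain
  refine ⟨⟨hchain.1, ?_, by simp⟩, hchain.2.1⟩
  cases l <;> simpa using hhead

theorem cost_le_Dfun : cost E w v0 x ≤ Dfun E w v0 F x :=
  le_iInf fun p => iInf_le_of_le ⟨p.1, p.2.1⟩ le_rfl

theorem Dfun_le_pathCost {p : List V} (hp : IsPath E v0 x p) (hF : ∀ v ∈ p.dropLast, v ∈ F) :
    Dfun E w v0 F x ≤ pathCost w p :=
  iInf_le_of_le ⟨p, hp, hF⟩ le_rfl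

theorem IsPath.dropLast_mem_or_exists_exit {p : List V} (hp : IsPath E v0 x p) :
    (∀ v ∈ p.dropLast, v ∈ F) ∨
      ∃ u v q, E u v ∧ u ∉ F ∧ IsPath E v0 u q ∧ (∀ y ∈ q.dropLast, y ∈ F) ∧
        pathCost w q + w u v ≤ pathCost w p := by
  induction p using List.reverseRecOn generalizing x with
  | nil => simp
  | append_singleton l a ih =>
    rcases l.eq_nil_or_concat with rfl | ⟨l, y, rfl⟩
    · simp
    simp only [List.concat_eq_append, List.append_assoc, List.cons_append,
      List.nil_append] at hp ih ⊢
    obtain rfl : a = x := by simpa using hp.2.2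
    obtain ⟨hpy, hyx⟩ := hp.of_append_pair
    rcases ih hpy with hF | ⟨u, v, q, huv, hu, hq, hqF, hcost⟩
    · by_cases hy : y ∈ F
      · left
        intro v hv
        simp only [List.dropLast_append_cons, List.dropLast_singleton, List.append_nil,
          List.dropLast_cons_cons, List.mem_append, List.mem_singleton] at hF hv
        rcases hv with hv | rfl
        exacts [hF v hv, hy]
      · exact Or.inr ⟨y, _, _, hyx, hy, hpy, hF, by rw [pathCost_append_pair]⟩
    · refine Or.inr ⟨u, v, q, huv, hu, hq, hqF, hcost.trans ?_⟩
      rw [pathCost_append_pair]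
      exact le_self_add

end Paths

theorem out_version_threshold_general (E : V → V → Prop) (w : V → V → ℝ≥0∞)
    (v0 : V) (F : Set V) (x : V)
    (hD : Dfun E w v0 F x ≤
      ⨅ e : {e : V × V // E e.1 e.2 ∧ e.1 ∉ F},
        (Dfun E w v0 F e.1.1 + w e.1.1 e.1.2)) :
    Dfun E w v0 F x = cost E w v0 x := by
  refine le_antisymm (le_iInf fun ⟨p, hp⟩ => ?_) cost_le_Dfun
  rcases hp.dropLast_mem_or_exists_exit (w := w) (F := F) with
    hF | ⟨u, v, q, huv, hu, hq, hqF, hcost⟩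
  · exact Dfun_le_pathCost hp hF
  calc Dfun E w v0 F x
      ≤ Dfun E w v0 F u + w u v :=
        hD.trans (iInf_le_of_le ⟨(u, v), huv, hu⟩ le_rfl)
    _ ≤ pathCost w q + w u v := add_le_add_left (Dfun_le_pathCost hq hqF) _
    _ ≤ pathCost w p := hcost

/-- Out-version threshold criterion (Lemma 8, Crauser et al.): if `x ∉ F` and
`D x ≤ ⨅ {D u + w u v : E u v ∧ u ∉ F}`, then `D x = cost x`. -/
theorem out_version_threshold [Fintype V] (E : V → V → Prop) (w : V → V → ℝ≥0∞)
    (hpos : ∀ u v, E u v → 0 < w u v) (hfin : ∀ u v, E u v → w u v < ⊤)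
    (v0 : V) (F : Set V) (hv0 : v0 ∈ F) (x : V) (hx : x ∉ F)
    (hD : Dfun E w v0 F x ≤
      ⨅ e : {e : V × V // E e.1 e.2 ∧ e.1 ∉ F},
        (Dfun E w v0 F e.1.1 + w e.1.1 e.1.2)) :
    Dfun E w v0 F x = cost E w v0 x :=
  out_version_threshold_general E w v0 F x hD
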